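/- arXiv:1607.01080 — 3 statements merged into one kernel-verified Lean document; each statement's English description precedes it below -/
import Mathlib

section
/- Let n be a natural number, a a real number, h > 0, and g : ℝ → ℝ a function that is (n+1)-times differentiable on the open interval (a, a+h), such that for every k ∈ {0,…,n+1} the right limit d_k := lim_{ξ→0⁺} g^{(k)}(a+ξ) exists, and such that g^{(n+1)} is continuous on (a, a+h) with m ≤ g^{(n+1)}(t)/(n+1)! ≤ M for all t ∈ (a, a+h). Then for every ε with 0 < ε < h and every k with 0 ≤ k ≤ n, the k-th Taylor coefficient of g at a+ε satisfies: g^{(k)}(a+ε)/k! ∈ Σ_{l=k}^{n} (binomial coefficient C(l,k)) · ε^{l-k} · d_l/l! + C(n+1,k) · ε^{n+1-k} · [m, M], i.e. there exists r ∈ [m, M] with g^{(k)}(a+ε)/k! = Σ_{l=k}^{n} C(l,k) ε^{l-k} d_l/l! + C(n+1,k) ε^{n+1-k} r. -/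
open Set Filter Topology

/-!
Taylor's theorem with Lagrange remainder for `g⁽ᵏ⁾` between `a + δ` and `a + ε` (`0 < δ < ε`),
divided by `k!`, writes `g⁽ᵏ⁾(a+ε)/k!` as `Σ C(l,k) (ε-δ)^(l-k) g⁽ˡ⁾(a+δ)/l!` plus
`C(n+1,k) (ε-δ)^(n+1-k)` times a value of `g⁽ⁿ⁺¹⁾/(n+1)!` in `[m, M]`. Solving for that value
and letting `δ → 0⁺`, it converges, and its limit stays in the closed interval `[m, M]`.
-/

section IteratedDeriv

variable {𝕜 F : Type*} [NontriviallyNormedField 𝕜] [NormedAddCommGroup F] [NormedSpace 𝕜 F]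

theorem iteratedDeriv_iteratedDeriv (i k : ℕ) (f : 𝕜 → F) :
    iteratedDeriv i (iteratedDeriv k f) = iteratedDeriv (k + i) f := by
  simp only [iteratedDeriv_eq_iterate, ← Function.iterate_add_apply, add_comm]

theorem iteratedDerivWithin_eqOn_iteratedDeriv {s : Set 𝕜} (hs : UniqueDiffOn 𝕜 s) {f : 𝕜 → F}
    {i : ℕ} (hf : ∀ j < i, ∀ t ∈ s, DifferentiableAt 𝕜 (iteratedDeriv j f) t) :
    EqOn (iteratedDerivWithin i f s) (iteratedDeriv i f) s := by
  induction i with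
  | zero => simp [EqOn]
  | succ i ih =>
    intro x hx
    have heq := ih fun j hj => hf j (hj.trans i.lt_succ_self)
    rw [iteratedDerivWithin_succ, derivWithin_congr heq (heq hx),
      (hf i i.lt_succ_self x hx).derivWithin (hs x hx), iteratedDeriv_succ]

end IteratedDeriv

theorem exists_taylor_lagrange_of_differentiableAt {f : ℝ → ℝ} {x y : ℝ} (hxy : x < y) {p : ℕ}
    (hf : ∀ j ≤ p, ∀ t ∈ Icc x y, DifferentiableAt ℝ (iteratedDeriv j f) t) :
    ∃ c ∈ Ioo x y, f y = ∑ i ∈ Finset.range (p + 1),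
      iteratedDeriv i f x / i.factorial * (y - x) ^ i +
        iteratedDeriv (p + 1) f c / (p + 1).factorial * (y - x) ^ (p + 1) := by
  have hI : uIcc x y = Icc x y := uIcc_of_lt hxy
  have heq : ∀ i ≤ p + 1,
      EqOn (iteratedDerivWithin i f (uIcc x y)) (iteratedDeriv i f) (uIcc x y) :=
    fun i hi => iteratedDerivWithin_eqOn_iteratedDeriv (uniqueDiffOn_uIcc hxy.ne)
      fun j hj => hI ▸ hf j (by omega)
  have hdiff : ∀ i ≤ p, DifferentiableOn ℝ (iteratedDerivWithin i f (uIcc x y)) (uIcc x y) :=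
    fun i hi t ht => ((hf i hi t (hI ▸ ht)).differentiableWithinAt).congr
      (heq i (by omega)) (heq i (by omega) ht)
  obtain ⟨c, hc, hT⟩ := taylor_mean_remainder_lagrange hxy.ne
    (contDiffOn_of_differentiableOn_deriv fun i hi => hdiff i (by exact_mod_cast hi))
    ((hdiff p le_rfl).mono uIoo_subset_uIcc_self)
  refine ⟨c, uIoo_of_lt hxy ▸ hc, ?_⟩
  rw [taylor_within_apply, heq (p + 1) le_rfl (uIoo_subset_uIcc_self hc)] at hT
  have hsum : ∑ i ∈ Finset.range (p + 1),
      ((i.factorial : ℝ)⁻¹ * (y - x) ^ i) • iteratedDerivWithin i f (uIcc x y) x =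
        ∑ i ∈ Finset.range (p + 1), iteratedDeriv i f x / i.factorial * (y - x) ^ i := by
    refine Finset.sum_congr rfl fun i hi => ?_
    rw [smul_eq_mul, heq i (Finset.mem_range.mp hi).le left_mem_uIcc]
    ring
  linear_combination hT + hsum

theorem div_factorial_mul_div_factorial_eq_choose_mul (k i : ℕ) (z t : ℝ) :
    z / i.factorial * t / k.factorial = ((k + i).choose k : ℝ) * t * (z / (k + i).factorial) := by
  rw [Nat.cast_choose ℝ (Nat.le_add_right k i), Nat.add_sub_cancel_left]
  field_simp

theorem exists_iteratedDeriv_div_factorial_eq_sum_add {g : ℝ → ℝ} {x y : ℝ} (hxy : x < y)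
    {k n : ℕ} (hkn : k ≤ n)
    (hg : ∀ j ≤ n, ∀ t ∈ Icc x y, DifferentiableAt ℝ (iteratedDeriv j g) t) :
    ∃ c ∈ Ioo x y, iteratedDeriv k g y / k.factorial =
      ∑ l ∈ Finset.Icc k n,
          (l.choose k : ℝ) * (y - x) ^ (l - k) * (iteratedDeriv l g x / l.factorial) +
        ((n + 1).choose k : ℝ) * (y - x) ^ (n + 1 - k) *
          (iteratedDeriv (n + 1) g c / (n + 1).factorial) := by
  obtain ⟨p, rfl⟩ := Nat.exists_eq_add_of_le hkn
  obtain ⟨c, hc, hT⟩ := exists_taylor_lagrange_of_differentiableAt hxy (f := iteratedDeriv k g)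
    (p := p) fun j hj t ht => by
      rw [iteratedDeriv_iteratedDeriv]; exact hg _ (by omega) t ht
  simp only [iteratedDeriv_iteratedDeriv] at hT
  refine ⟨c, hc, ?_⟩
  rw [hT, ← Finset.Ico_add_one_right_eq_Icc, Finset.sum_Ico_eq_sum_range, add_div, Finset.sum_div,
    show k + p + 1 - k = p + 1 by omega]
  congr 1
  · refine Finset.sum_congr rfl fun i _ => ?_
    rw [Nat.add_sub_cancel_left, div_factorial_mul_div_factorial_eq_choose_mul]
  · rw [add_assoc, div_factorial_mul_div_factorial_eq_choose_mul]

theorem exists_mem_eq_add_mul_of_tendsto {α K : Type*} [Field K] [TopologicalSpace K]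
    [IsTopologicalDivisionRing K] [T1Space K] {l : Filter α} [l.NeBot] {S : Set K} (hS : IsClosed S)
    {u w : α → K} {L W X : K} (hu : Tendsto u l (𝓝 L)) (hw : Tendsto w l (𝓝 W)) (hW : W ≠ 0)
    (h : ∀ᶠ t in l, ∃ r ∈ S, X = u t + w t * r) :
    ∃ r ∈ S, X = L + W * r := by
  refine ⟨(X - L) / W, hS.mem_of_tendsto ((tendsto_const_nhds.sub hu).div hw hW) ?_, ?_⟩
  · filter_upwards [h, hw.eventually_ne hW] with t ⟨r, hr, hX⟩ hwt
    change (X - u t) / w t ∈ S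
    rwa [hX, add_sub_cancel_left, mul_div_cancel_left₀ _ hwt]
  · rw [mul_div_cancel₀ _ hW, add_sub_cancel]

theorem taylor_coeff_enclosure_general
    (n : ℕ) (a h m M : ℝ) (g : ℝ → ℝ) (d : ℕ → ℝ)
    (hdiff : ∀ k ≤ n, ∀ t ∈ Ioo a (a + h), DifferentiableAt ℝ (iteratedDeriv k g) t)
    (hlim : ∀ k ≤ n + 1,
      Tendsto (fun ξ => iteratedDeriv k g (a + ξ)) (𝓝[>] (0 : ℝ)) (𝓝 (d k)))
    (hbound : ∀ t ∈ Ioo a (a + h),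
      m ≤ iteratedDeriv (n + 1) g t / (Nat.factorial (n + 1) : ℝ) ∧
        iteratedDeriv (n + 1) g t / (Nat.factorial (n + 1) : ℝ) ≤ M) :
    ∀ ε : ℝ, 0 < ε → ε < h → ∀ k ≤ n,
      ∃ r ∈ Icc m M,
        iteratedDeriv k g (a + ε) / (Nat.factorial k : ℝ) =
          (∑ l ∈ Finset.Icc k n,
              (l.choose k : ℝ) * ε ^ (l - k) * (d l / (Nat.factorial l : ℝ))) +
            ((n + 1).choose k : ℝ) * ε ^ (n + 1 - k) * r := by
  intro ε hε hεh k hk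
  have hgap : Tendsto (fun δ => ε - δ) (𝓝[>] 0) (𝓝 ε) :=
    ((continuous_sub_left ε).tendsto' 0 ε (sub_zero ε)).mono_left nhdsWithin_le_nhds
  refine exists_mem_eq_add_mul_of_tendsto isClosed_Icc
    (u := fun δ => ∑ l ∈ Finset.Icc k n,
      (l.choose k : ℝ) * (ε - δ) ^ (l - k) * (iteratedDeriv l g (a + δ) / l.factorial))
    (w := fun δ => ((n + 1).choose k : ℝ) * (ε - δ) ^ (n + 1 - k))
    (tendsto_finsetSum _ fun l hl => (tendsto_const_nhds.mul (hgap.pow _)).mul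
      ((hlim l (by grind)).div_const _))
    (tendsto_const_nhds.mul (hgap.pow _))
    (mul_ne_zero (Nat.cast_ne_zero.mpr (Nat.choose_pos (by omega)).ne') (pow_ne_zero _ hε.ne')) ?_
  filter_upwards [Ioo_mem_nhdsGT hε] with δ ⟨hδ, hδε⟩
  obtain ⟨c, hc, hcoeff⟩ := exists_iteratedDeriv_div_factorial_eq_sum_add
    (show a + δ < a + ε by linarith) hk
    fun j hj t ht => hdiff j hj t ⟨by linarith [ht.1], by linarith [ht.2]⟩
  refine ⟨_, hbound c ⟨by linarith [hc.1], by linarith [hc.2]⟩, ?_⟩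
  rw [hcoeff, add_sub_add_left_eq_sub]

/-- If `g : ℝ → ℝ` is `(n+1)`-times differentiable on `(a, a+h)`, the right limits
`d k` of the `k`-th derivatives at `a` exist for `k ≤ n+1`, and the `(n+1)`-st Taylor coefficient
`g⁽ⁿ⁺¹⁾/(n+1)!` is continuous on `(a, a+h)` with values in `[m, M]`, then for every `0 < ε < h`
and every `k ≤ n` the `k`-th Taylor coefficient of `g` at `a + ε` satisfies
`g⁽ᵏ⁾(a+ε)/k! = Σ_{l=k}^{n} C(l,k) ε^{l-k} d_l/l! + C(n+1,k) ε^{n+1-k} r` for some `r ∈ [m, M]`. -/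
theorem taylor_coeff_enclosure
    (n : ℕ) (a h m M : ℝ) (hh : 0 < h) (g : ℝ → ℝ) (d : ℕ → ℝ)
    (hdiff : ∀ k ≤ n, ∀ t ∈ Ioo a (a + h), DifferentiableAt ℝ (iteratedDeriv k g) t)
    (hlim : ∀ k ≤ n + 1,
      Tendsto (fun ξ => iteratedDeriv k g (a + ξ)) (𝓝[>] (0 : ℝ)) (𝓝 (d k)))
    (hcont : ContinuousOn (iteratedDeriv (n + 1) g) (Ioo a (a + h)))
    (hbound : ∀ t ∈ Ioo a (a + h),
      m ≤ iteratedDeriv (n + 1) g t / (Nat.factorial (n + 1) : ℝ) ∧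
        iteratedDeriv (n + 1) g t / (Nat.factorial (n + 1) : ℝ) ≤ M) :
    ∀ ε : ℝ, 0 < ε → ε < h → ∀ k ≤ n,
      ∃ r ∈ Icc m M,
        iteratedDeriv k g (a + ε) / (Nat.factorial k : ℝ) =
          (∑ l ∈ Finset.Icc k n,
              (l.choose k : ℝ) * ε ^ (l - k) * (d l / (Nat.factorial l : ℝ))) +
            ((n + 1).choose k : ℝ) * ε ^ (n + 1 - k) * r :=
  taylor_coeff_enclosure_general n a h m M g d hdiff hlim hbound
end

section
/- Let n be a natural number, a a real number, h > 0, and g : ℝ → ℝ a function that is (n+1)-times differentiable on the open interval (a, a+h), such that for every k ∈ {0,…,n+1} the right limit d_k := lim_{ξ→0⁺} g^{(k)}(a+ξ) exists, and such that g^{(n+1)} is continuous and bounded on (a, a+h). Then for every ε with 0 < ε < h there exists ξ ∈ (0, ε) such that g(a+ε) = Σ_{k=0}^{n} (d_k/k!) · ε^k + (g^{(n+1)}(a+ξ)/(n+1)!) · ε^{n+1}. -/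
open Set Filter Topology

/-!
Redefine `g` at `a` to be `d 0`. A function that is continuous at the left endpoint and whose
derivative has a limit there is one-sidedly differentiable there with that limit as derivative;
applied inductively to the iterated derivatives, this makes the modified function `Cⁿ` on
`[a, a + h)` with one-sided derivatives `d k` at `a`. Taylor's theorem with Lagrange remainder on
`[a, a + ε]` then gives the claim, since on `(a, a + ε)` the modified function agrees with `g`.
-/

theorem iteratedDerivWithin_eqOn_iteratedDeriv_of_eqOn {𝕜 E : Type*}
    [NontriviallyNormedField 𝕜] [NormedAddCommGroup E] [NormedSpace 𝕜 E] {F f : 𝕜 → E}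
    {U s : Set 𝕜} (hU : IsOpen U) (hUs : U ⊆ s) (hFf : EqOn F f U) (k : ℕ) :
    EqOn (iteratedDerivWithin k F s) (iteratedDeriv k f) U := by
  intro t ht
  rw [iteratedDerivWithin_eq_iteratedFDerivWithin, ← iteratedFDerivWithin_inter_open hU ht,
    inter_eq_right.2 hUs, iteratedFDerivWithin_of_isOpen k hU ht,
    ← iteratedDeriv_eq_iteratedFDeriv]
  exact ((hFf.eventuallyEq_of_mem (hU.mem_nhds ht)).iteratedDeriv k).eq_of_nhds

theorem tendsto_comp_add_nhdsGT_zero_iff {α : Type*} {φ : ℝ → α} {l : Filter α} {a : ℝ} :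
    Tendsto (fun ξ => φ (a + ξ)) (𝓝[>] 0) l ↔ Tendsto φ (𝓝[>] a) l := by
  conv_rhs => rw [← add_zero a, ← map_add_left_nhdsGT, tendsto_map'_iff]
  rfl

theorem hasDerivWithinAt_of_eqOn_Ioo_of_tendsto {E : Type*} [NormedAddCommGroup E]
    [NormedSpace ℝ E] {φ ψ : ℝ → E} {a b : ℝ} {c e : E} {s : Set ℝ} (hab : a < b)
    (hsa : s ⊆ Ici a) (hφψ : EqOn φ ψ (Ioo a b)) (hφa : φ a = c)
    (hψ : DifferentiableOn ℝ ψ (Ioo a b)) (hψc : Tendsto ψ (𝓝[>] a) (𝓝 c))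
    (hψ' : Tendsto (deriv ψ) (𝓝[>] a) (𝓝 e)) : HasDerivWithinAt φ e s a := by
  have hIoo : Ioo a b ∈ 𝓝[>] a := Ioo_mem_nhdsGT hab
  refine (hasDerivWithinAt_Ici_of_tendsto_deriv (hψ.congr hφψ) ?_ hIoo ?_).mono hsa
  · rw [ContinuousWithinAt, nhdsWithin_Ioo_eq_nhdsGT hab, hφa]
    exact hψc.congr' (eventuallyEq_of_mem hIoo hφψ).symm
  · refine hψ'.congr' ?_
    filter_upwards [hIoo] with t ht
    exact (hφψ.eventuallyEq_of_mem (isOpen_Ioo.mem_nhds ht)).deriv_eq.symm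

section OneSidedLimits

variable {F f : ℝ → ℝ} {d : ℕ → ℝ} {a b : ℝ} {s : Set ℝ}

theorem hasDerivWithinAt_iteratedDerivWithin_of_tendsto (hab : a < b) (hs : Ioo a b ⊆ s)
    (hsa : s ⊆ Ici a) (hFf : EqOn F f (Ioo a b)) {k : ℕ}
    (hdiff : DifferentiableOn ℝ (iteratedDeriv k f) (Ioo a b))
    (hlim : Tendsto (iteratedDeriv k f) (𝓝[>] a) (𝓝 (d k)))
    (hlim' : Tendsto (iteratedDeriv (k + 1) f) (𝓝[>] a) (𝓝 (d (k + 1))))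
    (hval : iteratedDerivWithin k F s a = d k) :
    HasDerivWithinAt (iteratedDerivWithin k F s) (d (k + 1)) s a := by
  refine hasDerivWithinAt_of_eqOn_Ioo_of_tendsto hab hsa
    (iteratedDerivWithin_eqOn_iteratedDeriv_of_eqOn isOpen_Ioo hs hFf k) hval hdiff hlim ?_
  rwa [← iteratedDeriv_succ]

theorem iteratedDerivWithin_eq_of_tendsto {n : ℕ} (hab : a < b) (hs : Ioo a b ⊆ s)
    (hsa : s ⊆ Ici a) (hFf : EqOn F f (Ioo a b)) (hF : F a = d 0)
    (hdiff : ∀ k < n, DifferentiableOn ℝ (iteratedDeriv k f) (Ioo a b))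
    (hlim : ∀ k ≤ n, Tendsto (iteratedDeriv k f) (𝓝[>] a) (𝓝 (d k))) :
    ∀ k ≤ n, iteratedDerivWithin k F s a = d k := by
  have hsa' : UniqueDiffWithinAt ℝ s a :=
    (uniqueDiffWithinAt_convex (convex_Ioo a b) (by simp [hab])
      (by simp [closure_Ioo hab.ne, hab.le])).mono hs
  intro k hk
  induction k with
  | zero => rwa [iteratedDerivWithin_zero]
  | succ k ih =>
    rw [iteratedDerivWithin_succ]
    exact (hasDerivWithinAt_iteratedDerivWithin_of_tendsto hab hs hsa hFf (hdiff k hk)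
      (hlim k (by omega)) (hlim (k + 1) hk) (ih (by omega))).derivWithin hsa'

theorem contDiffOn_Ico_of_tendsto {n : ℕ} (hab : a < b) (hFf : EqOn F f (Ioo a b))
    (hF : F a = d 0) (hdiff : ∀ k ≤ n, DifferentiableOn ℝ (iteratedDeriv k f) (Ioo a b))
    (hlim : ∀ k ≤ n + 1, Tendsto (iteratedDeriv k f) (𝓝[>] a) (𝓝 (d k))) :
    ContDiffOn ℝ n F (Ico a b) := by
  refine contDiffOn_of_differentiableOn_deriv fun m hm t ht => ?_
  have hm : m ≤ n := by exact_mod_cast hm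
  obtain rfl | hat := ht.1.eq_or_lt
  · have hval := iteratedDerivWithin_eq_of_tendsto hab Ioo_subset_Ico_self Ico_subset_Ici_self
      hFf hF (fun k hk => hdiff k (by omega)) (fun k hk => hlim k (by omega)) m hm
    exact (hasDerivWithinAt_iteratedDerivWithin_of_tendsto hab Ioo_subset_Ico_self
      Ico_subset_Ici_self hFf (hdiff m hm) (hlim m (by omega)) (hlim (m + 1) (by omega))
      hval).differentiableWithinAt
  · have ht : Ioo a b ∈ 𝓝 t := isOpen_Ioo.mem_nhds ⟨hat, ht.2⟩
    have heq := (iteratedDerivWithin_eqOn_iteratedDeriv_of_eqOn isOpen_Ioo Ioo_subset_Ico_self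
      hFf m).eventuallyEq_of_mem ht
    exact (heq.differentiableAt_iff.2 ((hdiff m hm).differentiableAt ht)).differentiableWithinAt

end OneSidedLimits

theorem taylor_mean_remainder_lagrange_of_tendsto {f : ℝ → ℝ} {d : ℕ → ℝ} {a b x : ℝ} {n : ℕ}
    (hax : a < x) (hxb : x < b)
    (hdiff : ∀ k ≤ n, DifferentiableOn ℝ (iteratedDeriv k f) (Ioo a b))
    (hlim : ∀ k ≤ n + 1, Tendsto (iteratedDeriv k f) (𝓝[>] a) (𝓝 (d k))) :
    ∃ x' ∈ Ioo a x, f x =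
      (∑ k ∈ Finset.range (n + 1), d k / (Nat.factorial k : ℝ) * (x - a) ^ k) +
        iteratedDeriv (n + 1) f x' / (Nat.factorial (n + 1) : ℝ) * (x - a) ^ (n + 1) := by
  set F := Function.update f a (d 0)
  have hFf : EqOn F f (Ioi a) := fun t ht => Function.update_of_ne ht.ne' _ _
  have hFa : F a = d 0 := Function.update_self ..
  have hderiv := iteratedDerivWithin_eqOn_iteratedDeriv_of_eqOn isOpen_Ioo
    Ioo_subset_Icc_self (hFf.mono Ioo_subset_Ioi_self) (s := Icc a x)
  have hval := iteratedDerivWithin_eq_of_tendsto hax Ioo_subset_Icc_self Icc_subset_Ici_self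
    (hFf.mono Ioo_subset_Ioi_self) hFa
    (fun k hk => (hdiff k hk.le).mono (Ioo_subset_Ioo_right hxb.le))
    (fun k hk => hlim k (by omega))
  have hcd : ContDiffOn ℝ n F (Icc a x) :=
    (contDiffOn_Ico_of_tendsto (hax.trans hxb) (hFf.mono Ioo_subset_Ioi_self) hFa hdiff
      hlim).mono (Icc_subset_Ico_right hxb)
  have hcd' : DifferentiableOn ℝ (iteratedDerivWithin n F (Icc a x)) (Ioo a x) :=
    ((hdiff n le_rfl).mono (Ioo_subset_Ioo_right hxb.le)).congr (hderiv n)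
  obtain ⟨x', hx', htaylor⟩ := taylor_mean_remainder_lagrange hax.ne
    (by rwa [uIcc_of_le hax.le]) (by rwa [uIcc_of_le hax.le, uIoo_of_le hax.le])
  rw [uIcc_of_le hax.le, uIoo_of_le hax.le] at *
  have hpoly : taylorWithinEval F n (Icc a x) a x =
      ∑ k ∈ Finset.range (n + 1), d k / (Nat.factorial k : ℝ) * (x - a) ^ k := by
    refine (taylor_within_apply ..).trans (Finset.sum_congr rfl fun k hk => ?_)
    rw [hval k (Finset.mem_range_succ_iff.1 hk), smul_eq_mul]
    ring
  rw [hpoly, hFf hax, hderiv (n + 1) hx'] at htaylor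
  exact ⟨x', hx', by linear_combination htaylor⟩

theorem piecewise_taylor_lagrange_general
    (n : ℕ) (a h : ℝ) (g : ℝ → ℝ) (d : ℕ → ℝ)
    (hdiff : ∀ k ≤ n, ∀ t ∈ Ioo a (a + h), DifferentiableAt ℝ (iteratedDeriv k g) t)
    (hlim : ∀ k ≤ n + 1,
      Tendsto (fun ξ => iteratedDeriv k g (a + ξ)) (𝓝[>] (0 : ℝ)) (𝓝 (d k))) :
    ∀ ε : ℝ, 0 < ε → ε < h →
      ∃ ξ ∈ Ioo (0 : ℝ) ε,
        g (a + ε) =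
          (∑ k ∈ Finset.range (n + 1), d k / (Nat.factorial k : ℝ) * ε ^ k) +
            iteratedDeriv (n + 1) g (a + ξ) / (Nat.factorial (n + 1) : ℝ) * ε ^ (n + 1) := by
  intro ε hε hεh
  obtain ⟨x, hx, htaylor⟩ :=
    taylor_mean_remainder_lagrange_of_tendsto (x := a + ε) (b := a + h) (by linarith) (by linarith)
    (fun k hk t ht => (hdiff k hk t ht).differentiableWithinAt)
    (fun k hk => tendsto_comp_add_nhdsGT_zero_iff.1 (hlim k hk))
  refine ⟨x - a, ⟨sub_pos.2 hx.1, by linarith [hx.2]⟩, ?_⟩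
  rw [add_sub_cancel]
  rwa [add_sub_cancel_left] at htaylor

/-- If `g : ℝ → ℝ` is `(n+1)`-times differentiable on `(a, a+h)`, the right limits
`d k` of the `k`-th derivatives at `a` exist for `k ≤ n+1`, and `g⁽ⁿ⁺¹⁾` is continuous and
bounded on `(a, a+h)`, then for every `0 < ε < h` there is `ξ ∈ (0, ε)` with
`g(a+ε) = Σ_{k=0}^{n} (d_k/k!) ε^k + (g⁽ⁿ⁺¹⁾(a+ξ)/(n+1)!) ε^{n+1}`. -/
theorem piecewise_taylor_lagrange
    (n : ℕ) (a h : ℝ) (hh : 0 < h) (g : ℝ → ℝ) (d : ℕ → ℝ)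
    (hdiff : ∀ k ≤ n, ∀ t ∈ Ioo a (a + h), DifferentiableAt ℝ (iteratedDeriv k g) t)
    (hlim : ∀ k ≤ n + 1,
      Tendsto (fun ξ => iteratedDeriv k g (a + ξ)) (𝓝[>] (0 : ℝ)) (𝓝 (d k)))
    (hcont : ContinuousOn (iteratedDeriv (n + 1) g) (Ioo a (a + h)))
    (hbdd : ∃ C : ℝ, ∀ t ∈ Ioo a (a + h), |iteratedDeriv (n + 1) g t| ≤ C) :
    ∀ ε : ℝ, 0 < ε → ε < h →
      ∃ ξ ∈ Ioo (0 : ℝ) ε,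
        g (a + ε) =
          (∑ k ∈ Finset.range (n + 1), d k / (Nat.factorial k : ℝ) * ε ^ k) +
            iteratedDeriv (n + 1) g (a + ξ) / (Nat.factorial (n + 1) : ℝ) * ε ^ (n + 1) :=
  piecewise_taylor_lagrange_general n a h g d hdiff hlim
end

section
/- Let [ḡ] be a bounded subset of ℝ^m with m = p·(n+2)+1. If [ḡ] is a convex subset of ℝ^m, then Supp([ḡ]) is a convex subset of the real vector space of functions from [-1,0] to ℝ; that is, for all g₁, g₂ ∈ Supp([ḡ]) and all t ∈ [0,1], the function t·g₁ + (1-t)·g₂ belongs to Supp([ḡ]). -/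
open Set Filter Topology

noncomputable section

/-- Finite-dimensional coefficient space isomorphic to `ℝ^m`, `m = p·(n+2)+1`:
the value at `0`, the Taylor coefficients `g^{[k]}((-i·h)⁺)` for `1 ≤ i ≤ p`, `0 ≤ k ≤ n`
(indexed here by `i : Fin p` standing for the grid point `-(i+1)·h`), and the `p` remainders. -/
abbrev PNRep (p n : ℕ) : Type := ℝ × (Fin p → Fin (n + 1) → ℝ) × (Fin p → ℝ)

/-- The left endpoint `-(i+1)·h` (with `h = 1/p`) of the `i`-th grid subinterval. -/
def gridPt (p : ℕ) (i : Fin p) : ℝ := -((i : ℝ) + 1) * (1 / p)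

/-- The class `C^n_p`: on each grid subinterval `(-(i+1)h, -(i+1)h + h)`, `g` is `(n+1)`-times
differentiable, all right limits `g⁽ᵏ⁾((-(i+1)h)⁺)`, `k ≤ n+1`, exist, and `g⁽ⁿ⁺¹⁾` is
continuous and bounded there. -/
def IsCnp (p n : ℕ) (g : ℝ → ℝ) : Prop :=
  ∀ i : Fin p,
    (∀ k ≤ n, ∀ t ∈ Ioo (gridPt p i) (gridPt p i + 1 / p),
        DifferentiableAt ℝ (iteratedDeriv k g) t) ∧
    (∀ k ≤ n + 1, ∃ dk : ℝ,
        Tendsto (fun ξ => iteratedDeriv k g (gridPt p i + ξ)) (𝓝[>] (0 : ℝ)) (𝓝 dk)) ∧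
    ContinuousOn (iteratedDeriv (n + 1) g) (Ioo (gridPt p i) (gridPt p i + 1 / p)) ∧
    ∃ C : ℝ, ∀ t ∈ Ioo (gridPt p i) (gridPt p i + 1 / p), |iteratedDeriv (n + 1) g t| ≤ C

/-- The right limit `g⁽ᵏ⁾(a⁺)` divided by `k!`, i.e. the Taylor coefficient
`g^{[k]}(a⁺)` (defined via `limUnder`; meaningful when the limit exists). -/
def rightCoeff (g : ℝ → ℝ) (k : ℕ) (a : ℝ) : ℝ :=
  limUnder (𝓝[>] (0 : ℝ)) (fun ξ => iteratedDeriv k g (a + ξ)) / (Nat.factorial k : ℝ)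

/-- The range of the `(n+1)`-st Taylor coefficient `g^{[n+1]}` on the open `i`-th subinterval. -/
def remainderRange (p n : ℕ) (g : ℝ → ℝ) (i : Fin p) : Set ℝ :=
  (fun ξ => iteratedDeriv (n + 1) g (gridPt p i + ξ) / (Nat.factorial (n + 1) : ℝ)) ''
    Ioo (0 : ℝ) (1 / p)

/-- The minimal `(p,n)`-representation `{a} × B` of `g`: the coefficient vector is uniquely
determined, and the remainder components range over
`[inf g^{[n+1]}, sup g^{[n+1]}]` on each subinterval. -/
def minRep (p n : ℕ) (g : ℝ → ℝ) : Set (PNRep p n) :=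
  {x : PNRep p n |
    x.1 = g 0 ∧
    (∀ i : Fin p, ∀ k : Fin (n + 1), x.2.1 i k = rightCoeff g k (gridPt p i)) ∧
    (∀ i : Fin p,
      x.2.2 i ∈ Icc (sInf (remainderRange p n g i)) (sSup (remainderRange p n g i)))}

/-- The support of a set `[ḡ] ⊆ ℝ^m`: all `g ∈ C^n_p` whose minimal `(p,n)`-representation
is contained in `[ḡ]`. -/
def Supp (p n : ℕ) (G : Set (PNRep p n)) : Set (ℝ → ℝ) :=
  {g : ℝ → ℝ | IsCnp p n g ∧ minRep p n g ⊆ G}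

/-! On each open grid interval the derivatives of `a g₁ + b g₂` are the same combinations of
the derivatives of `g₁` and `g₂`; hence `C^n_p` is closed under such combinations and the
coefficient vector of the minimal representation is linear in `g`. For `a, b ≥ 0` the
infimum (supremum) of `g^{[n+1]}` for the combination is at least (at most) the combination of
the infima (suprema), so its remainder box lies in `a • B₁ + b • B₂`. Altogether
`ḡ ⊆ t • ḡ₁ + (1 - t) • ḡ₂ ⊆ t • [ḡ] + (1 - t) • [ḡ] ⊆ [ḡ]`, the last step by convexity. -/

open scoped Pointwise

section LinearComb

variable {𝕜 F : Type*} [NontriviallyNormedField 𝕜] [NormedAddCommGroup F] [NormedSpace 𝕜 F]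

theorem iteratedDeriv_linearComb_eqOn {f g : 𝕜 → F} {s : Set 𝕜} {n : ℕ} (hs : IsOpen s)
    (hf : ∀ k ≤ n, ∀ x ∈ s, DifferentiableAt 𝕜 (iteratedDeriv k f) x)
    (hg : ∀ k ≤ n, ∀ x ∈ s, DifferentiableAt 𝕜 (iteratedDeriv k g) x) (a b : 𝕜) :
    ∀ k ≤ n + 1, EqOn (iteratedDeriv k fun x => a • f x + b • g x)
      (fun x => a • iteratedDeriv k f x + b • iteratedDeriv k g x) s := by
  intro k
  induction k with
  | zero => intro _ x _; simp
  | succ k ih =>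
    intro hk x hx
    have hkn : k ≤ n := by omega
    have hnear := (ih (by omega)).eventuallyEq_of_mem (hs.mem_nhds hx)
    rw [iteratedDeriv_succ, iteratedDeriv_succ, iteratedDeriv_succ, hnear.deriv_eq]
    exact (((hf k hkn x hx).hasDerivAt.const_smul a).add
      ((hg k hkn x hx).hasDerivAt.const_smul b)).deriv

end LinearComb

theorem Icc_linearComb_subset {a b c d : ℝ} (hab : a ≤ b) (hcd : c ≤ d) (s u : ℝ) :
    Icc (s * a + u * c) (s * b + u * d) ⊆ s • Icc a b + u • Icc c d :=
  (((convex_Icc a b).smul s).add ((convex_Icc c d).smul u)).ordConnected.out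
    (Set.add_mem_add (smul_mem_smul_set ⟨le_rfl, hab⟩) (smul_mem_smul_set ⟨le_rfl, hcd⟩))
    (Set.add_mem_add (smul_mem_smul_set ⟨hab, le_rfl⟩) (smul_mem_smul_set ⟨hcd, le_rfl⟩))

section ImageBounds

variable {α : Type*} {S : Set α} {f g : α → ℝ} {a b : ℝ}

theorem linearComb_csInf_image_le (hS : S.Nonempty) (hf : BddBelow (f '' S))
    (hg : BddBelow (g '' S)) (ha : 0 ≤ a) (hb : 0 ≤ b) :
    a * sInf (f '' S) + b * sInf (g '' S) ≤ sInf ((fun x => a * f x + b * g x) '' S) :=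
  le_csInf (hS.image _) <| forall_mem_image.2 fun _ hx =>
    add_le_add (mul_le_mul_of_nonneg_left (csInf_le hf (mem_image_of_mem f hx)) ha)
      (mul_le_mul_of_nonneg_left (csInf_le hg (mem_image_of_mem g hx)) hb)

theorem csSup_image_le_linearComb (hS : S.Nonempty) (hf : BddAbove (f '' S))
    (hg : BddAbove (g '' S)) (ha : 0 ≤ a) (hb : 0 ≤ b) :
    sSup ((fun x => a * f x + b * g x) '' S) ≤ a * sSup (f '' S) + b * sSup (g '' S) :=
  csSup_le (hS.image _) <| forall_mem_image.2 fun _ hx =>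
    add_le_add (mul_le_mul_of_nonneg_left (le_csSup hf (mem_image_of_mem f hx)) ha)
      (mul_le_mul_of_nonneg_left (le_csSup hg (mem_image_of_mem g hx)) hb)

end ImageBounds

theorem gridPt_add_mem_Ioo {p : ℕ} (i : Fin p) {ξ : ℝ} (hξ : ξ ∈ Ioo (0 : ℝ) (1 / p)) :
    gridPt p i + ξ ∈ Ioo (gridPt p i) (gridPt p i + 1 / p) := by
  rwa [add_mem_Ioo_iff_right, sub_self, add_sub_cancel_left]

theorem eventually_gridPt_add_mem_Ioo {p : ℕ} (i : Fin p) :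
    ∀ᶠ ξ in 𝓝[>] (0 : ℝ), gridPt p i + ξ ∈ Ioo (gridPt p i) (gridPt p i + 1 / p) :=
  eventually_of_mem (Ioo_mem_nhdsGT (by have := i.pos; positivity : (0 : ℝ) < 1 / p)) fun _ =>
    gridPt_add_mem_Ioo i

namespace IsCnp

variable {p n : ℕ} {f g : ℝ → ℝ}

theorem iteratedDeriv_linearComb_eqOn (hf : IsCnp p n f) (hg : IsCnp p n g) (a b : ℝ)
    (i : Fin p) {k : ℕ} (hk : k ≤ n + 1) :
    EqOn (iteratedDeriv k fun x => a * f x + b * g x)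
      (fun x => a * iteratedDeriv k f x + b * iteratedDeriv k g x)
      (Ioo (gridPt p i) (gridPt p i + 1 / p)) :=
  _root_.iteratedDeriv_linearComb_eqOn isOpen_Ioo (hf i).1 (hg i).1 a b k hk

theorem tendsto_iteratedDeriv_linearComb (hf : IsCnp p n f) (hg : IsCnp p n g) (a b : ℝ)
    (i : Fin p) {k : ℕ} (hk : k ≤ n + 1) {d₁ d₂ : ℝ}
    (h₁ : Tendsto (fun ξ => iteratedDeriv k f (gridPt p i + ξ)) (𝓝[>] 0) (𝓝 d₁))
    (h₂ : Tendsto (fun ξ => iteratedDeriv k g (gridPt p i + ξ)) (𝓝[>] 0) (𝓝 d₂)) :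
    Tendsto (fun ξ => iteratedDeriv k (fun x => a * f x + b * g x) (gridPt p i + ξ)) (𝓝[>] 0)
      (𝓝 (a * d₁ + b * d₂)) :=
  ((h₁.const_mul a).add (h₂.const_mul b)).congr' <| (eventually_gridPt_add_mem_Ioo i).mono
    fun _ hξ => (iteratedDeriv_linearComb_eqOn hf hg a b i hk hξ).symm

theorem linearComb (hf : IsCnp p n f) (hg : IsCnp p n g) (a b : ℝ) :
    IsCnp p n fun x => a * f x + b * g x := by
  intro i
  obtain ⟨hdf, hlf, hcf, Cf, hCf⟩ := hf i
  obtain ⟨hdg, hlg, hcg, Cg, hCg⟩ := hg i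
  have hEq := fun k (hk : k ≤ n + 1) => iteratedDeriv_linearComb_eqOn hf hg a b i hk
  refine ⟨fun k hk x hx => ?_, fun k hk => ?_, ?_, |a| * Cf + |b| * Cg, fun x hx => ?_⟩
  · exact (((hdf k hk x hx).const_mul a).add ((hdg k hk x hx).const_mul b)).congr_of_eventuallyEq
      ((hEq k (by omega)).eventuallyEq_of_mem (isOpen_Ioo.mem_nhds hx))
  · obtain ⟨d₁, h₁⟩ := hlf k hk
    obtain ⟨d₂, h₂⟩ := hlg k hk
    exact ⟨_, tendsto_iteratedDeriv_linearComb hf hg a b i hk h₁ h₂⟩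
  · exact ((continuousOn_const.mul hcf).add (continuousOn_const.mul hcg)).congr
      (hEq (n + 1) le_rfl)
  · rw [hEq (n + 1) le_rfl hx]
    calc |a * iteratedDeriv (n + 1) f x + b * iteratedDeriv (n + 1) g x|
        ≤ |a| * |iteratedDeriv (n + 1) f x| + |b| * |iteratedDeriv (n + 1) g x| := by
          rw [← abs_mul, ← abs_mul]; exact abs_add_le _ _
      _ ≤ |a| * Cf + |b| * Cg := by gcongr; exacts [hCf x hx, hCg x hx]

theorem rightCoeff_linearComb (hf : IsCnp p n f) (hg : IsCnp p n g) (a b : ℝ)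
    (i : Fin p) {k : ℕ} (hk : k ≤ n + 1) :
    rightCoeff (fun x => a * f x + b * g x) k (gridPt p i)
      = a * rightCoeff f k (gridPt p i) + b * rightCoeff g k (gridPt p i) := by
  obtain ⟨d₁, h₁⟩ := (hf i).2.1 k hk
  obtain ⟨d₂, h₂⟩ := (hg i).2.1 k hk
  simp only [rightCoeff, (tendsto_iteratedDeriv_linearComb hf hg a b i hk h₁ h₂).limUnder_eq,
    h₁.limUnder_eq, h₂.limUnder_eq]
  ring

theorem isBounded_remainderRange (hf : IsCnp p n f) (i : Fin p) :
    Bornology.IsBounded (remainderRange p n f i) := by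
  obtain ⟨C, hC⟩ := (hf i).2.2.2
  refine isBounded_iff_forall_norm_le.2 ⟨C / (n + 1).factorial, forall_mem_image.2 fun ξ hξ => ?_⟩
  rw [Real.norm_eq_abs, abs_div, Nat.abs_cast]
  gcongr
  exact hC _ (gridPt_add_mem_Ioo i hξ)

theorem remainderRange_linearComb (hf : IsCnp p n f) (hg : IsCnp p n g) (a b : ℝ) (i : Fin p) :
    remainderRange p n (fun x => a * f x + b * g x) i
      = (fun ξ => a * (iteratedDeriv (n + 1) f (gridPt p i + ξ) / (n + 1).factorial)
          + b * (iteratedDeriv (n + 1) g (gridPt p i + ξ) / (n + 1).factorial)) ''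
        Ioo 0 (1 / p) :=
  image_congr fun ξ hξ => by
    rw [iteratedDeriv_linearComb_eqOn hf hg a b i le_rfl (gridPt_add_mem_Ioo i hξ)]
    ring

theorem Icc_remainderRange_linearComb_subset (hf : IsCnp p n f) (hg : IsCnp p n g) {a b : ℝ}
    (ha : 0 ≤ a) (hb : 0 ≤ b) (i : Fin p) :
    Icc (sInf (remainderRange p n (fun x => a * f x + b * g x) i))
        (sSup (remainderRange p n (fun x => a * f x + b * g x) i))
      ⊆ a • Icc (sInf (remainderRange p n f i)) (sSup (remainderRange p n f i))
        + b • Icc (sInf (remainderRange p n g i)) (sSup (remainderRange p n g i)) := by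
  have hne : (Ioo (0 : ℝ) (1 / p)).Nonempty := nonempty_Ioo.2 (by have := i.pos; positivity)
  have hbf := hf.isBounded_remainderRange i
  have hbg := hg.isBounded_remainderRange i
  rw [remainderRange_linearComb hf hg a b i]
  refine (Icc_subset_Icc ?_ ?_).trans (Icc_linearComb_subset ?_ ?_ a b)
  · exact linearComb_csInf_image_le hne hbf.bddBelow hbg.bddBelow ha hb
  · exact csSup_image_le_linearComb hne hbf.bddAbove hbg.bddAbove ha hb
  · exact csInf_le_csSup (hne.image _) hbf.bddBelow hbf.bddAbove
  · exact csInf_le_csSup (hne.image _) hbg.bddBelow hbg.bddAbove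

theorem minRep_linearComb_subset (hf : IsCnp p n f) (hg : IsCnp p n g) {a b : ℝ}
    (ha : 0 ≤ a) (hb : 0 ≤ b) :
    minRep p n (fun x => a * f x + b * g x) ⊆ a • minRep p n f + b • minRep p n g := by
  rintro ⟨x₀, c, r⟩ ⟨hx₀, hc, hr⟩
  have hsplit := fun i => Icc_remainderRange_linearComb_subset hf hg ha hb i (hr i)
  simp only [Set.mem_add, mem_smul_set, exists_exists_and_eq_and] at hsplit
  choose y hy z hz hyz using hsplit
  have hyf : ((f 0, fun i k => rightCoeff f k (gridPt p i), y) : PNRep p n) ∈ minRep p n f :=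
    ⟨rfl, fun _ _ => rfl, hy⟩
  have hzg : ((g 0, fun i k => rightCoeff g k (gridPt p i), z) : PNRep p n) ∈ minRep p n g :=
    ⟨rfl, fun _ _ => rfl, hz⟩
  refine Set.mem_add.2 ⟨_, smul_mem_smul_set hyf, _, smul_mem_smul_set hzg, ?_⟩
  simp only [Prod.smul_mk, Prod.mk_add_mk, Prod.mk.injEq, smul_eq_mul]
  refine ⟨hx₀.symm, funext₂ fun i k => ?_, funext fun i => ?_⟩
  · exact ((hc i k).trans (rightCoeff_linearComb hf hg a b i (by omega))).symm
  · simpa only [Pi.add_apply, Pi.smul_apply, smul_eq_mul] using hyz i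

end IsCnp

theorem supp_convex_general (p n : ℕ)
    (G : Set (PNRep p n))
    (hconv : Convex ℝ G) :
    ∀ g₁ ∈ Supp p n G, ∀ g₂ ∈ Supp p n G, ∀ t : ℝ, t ∈ Icc (0 : ℝ) 1 →
      (fun s => t * g₁ s + (1 - t) * g₂ s) ∈ Supp p n G := by
  rintro g₁ ⟨hg₁, hsub₁⟩ g₂ ⟨hg₂, hsub₂⟩ t ⟨ht₀, ht₁⟩
  have h1t : 0 ≤ 1 - t := sub_nonneg.2 ht₁
  refine ⟨hg₁.linearComb hg₂ t (1 - t), ?_⟩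
  calc minRep p n (fun s => t * g₁ s + (1 - t) * g₂ s)
      ⊆ t • minRep p n g₁ + (1 - t) • minRep p n g₂ := hg₁.minRep_linearComb_subset hg₂ ht₀ h1t
    _ ⊆ t • G + (1 - t) • G := add_subset_add (smul_set_mono hsub₁) (smul_set_mono hsub₂)
    _ ⊆ G := hconv.set_combo_subset ht₀ h1t (add_sub_cancel t 1)

/-- If a bounded `(p,n)`-representation `[ḡ] ⊆ ℝ^m`, `m = p(n+2)+1`, is convex,
then `Supp([ḡ])` is a convex subset of the real vector space of functions: for all
`g₁, g₂ ∈ Supp([ḡ])` and `t ∈ [0,1]`, the function `t·g₁ + (1-t)·g₂` is in `Supp([ḡ])`. -/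
theorem supp_convex (p n : ℕ) (hp : 0 < p)
    (G : Set (PNRep p n))
    (hG : Bornology.IsBounded G) (hconv : Convex ℝ G) :
    ∀ g₁ ∈ Supp p n G, ∀ g₂ ∈ Supp p n G, ∀ t : ℝ, t ∈ Icc (0 : ℝ) 1 →
      (fun s => t * g₁ s + (1 - t) * g₂ s) ∈ Supp p n G :=
  supp_convex_general p n G hconv

end
end
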